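/- Let Z = A + iB + jC + kD be an invertible n×n quaternion matrix with A,B,C,D real matrices such that A + iB is invertible in M_n(ℂ). Then (A+iB) + (C+iD)(A-iB)⁻¹(C-iD) is invertible in M_n(ℂ), and Z⁻¹ = W₁ - jW₂ where W₁ = [(A+iB) + (C+iD)(A-iB)⁻¹(C-iD)]⁻¹ and W₂ = (A-iB)⁻¹(C-iD)·W₁. -/

import Mathlib

open Quaternion Matrix

/-- The embedding of ℂ into the quaternions via the span of 1 and i. -/
noncomputable def toQ (z : ℂ) : ℍ[ℝ] := ⟨z.re, z.im, 0, 0⟩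

/-- The quaternion unit j. -/
def jq : ℍ[ℝ] := ⟨0, 0, 1, 0⟩

/-- The quaternion matrix A + iB + jC + kD built from four real matrices. -/
def qmat4 {n : ℕ} (A B C D : Matrix (Fin n) (Fin n) ℝ) :
    Matrix (Fin n) (Fin n) ℍ[ℝ] :=
  fun i j => ⟨A i j, B i j, C i j, D i j⟩

/-- The complex matrix A + iB built from two real matrices. -/
def cmat {n : ℕ} (A B : Matrix (Fin n) (Fin n) ℝ) : Matrix (Fin n) (Fin n) ℂ :=
  fun i j => ⟨A i j, B i j⟩

noncomputable def toQRH : ℂ →+* ℍ[ℝ] where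
  toFun := toQ
  map_one' := by ext <;> simp [toQ]
  map_mul' z w := by ext <;> simp <;> simp [toQ] <;> ring
  map_zero' := by ext <;> simp [toQ]
  map_add' z w := by ext <;> simp <;> simp [toQ]

lemma jq_toQ (z : ℂ) : jq * toQ z = toQ ((starRingEnd ℂ) z) * jq := by
  ext <;> simp <;> simp [toQ, jq]

lemma jq_jq : jq * jq = -1 := by ext <;> simp <;> simp [jq]

variable {n : ℕ}

noncomputable def mapQ (M : Matrix (Fin n) (Fin n) ℂ) : Matrix (Fin n) (Fin n) ℍ[ℝ] :=
  M.map toQRH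

noncomputable def Jm : Matrix (Fin n) (Fin n) ℍ[ℝ] := Matrix.diagonal (fun _ => jq)

def cst (M : Matrix (Fin n) (Fin n) ℂ) : Matrix (Fin n) (Fin n) ℂ :=
  M.map (starRingEnd ℂ)

noncomputable def Phi (X Y : Matrix (Fin n) (Fin n) ℂ) : Matrix (Fin n) (Fin n) ℍ[ℝ] :=
  mapQ X + Jm * mapQ Y

lemma mapQ_mul (M N : Matrix (Fin n) (Fin n) ℂ) : mapQ (M * N) = mapQ M * mapQ N :=
  Matrix.map_mul

lemma mapQ_add (M N : Matrix (Fin n) (Fin n) ℂ) : mapQ (M + N) = mapQ M + mapQ N :=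
  Matrix.map_add _ (by simp) M N

lemma cst_mul (M N : Matrix (Fin n) (Fin n) ℂ) : cst (M * N) = cst M * cst N :=
  Matrix.map_mul

lemma cst_add (M N : Matrix (Fin n) (Fin n) ℂ) : cst (M + N) = cst M + cst N := by
  funext i j; simp [cst, Matrix.map_apply]

lemma cst_zero : cst (0 : Matrix (Fin n) (Fin n) ℂ) = 0 := by
  funext i j; simp [cst]

lemma cst_cst (M : Matrix (Fin n) (Fin n) ℂ) : cst (cst M) = M := by
  ext i j; simp [cst]

lemma mapQ_neg (M : Matrix (Fin n) (Fin n) ℂ) : mapQ (-M) = -(mapQ M) := by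
  funext i j; simp [mapQ, Matrix.map_apply]

lemma Jm_mapQ (M : Matrix (Fin n) (Fin n) ℂ) : Jm * mapQ M = mapQ (cst M) * Jm := by
  funext i j
  rw [Jm, Matrix.diagonal_mul, Matrix.mul_diagonal]
  simpa [mapQ, cst, Matrix.map_apply, toQRH] using jq_toQ (M i j)

lemma mapQ_Jm (M : Matrix (Fin n) (Fin n) ℂ) : mapQ M * Jm = Jm * mapQ (cst M) := by
  rw [Jm_mapQ, cst_cst]

lemma Jm_Jm : (Jm : Matrix (Fin n) (Fin n) ℍ[ℝ]) * Jm = -1 := by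
  rw [Jm, Matrix.diagonal_mul_diagonal]
  simp only [jq_jq]
  funext i j
  by_cases h : i = j <;> simp [Matrix.diagonal_apply, h, Matrix.one_apply]

lemma Phi_mul (X Y P Q : Matrix (Fin n) (Fin n) ℂ) :
    Phi X Y * Phi P Q = Phi (X * P - cst Y * Q) (cst X * Q + Y * P) := by
  simp only [Phi, mapQ_mul, mapQ_add, sub_eq_add_neg, mapQ_add]
  have h1 : mapQ X * (Jm * mapQ Q) = Jm * (mapQ (cst X) * mapQ Q) := by
    rw [← mul_assoc, mapQ_Jm, mul_assoc]
  have h2 : (Jm * mapQ Y) * mapQ P = Jm * (mapQ Y * mapQ P) := by rw [mul_assoc]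
  have h3 : (Jm * mapQ Y) * (Jm * mapQ Q) = -(mapQ (cst Y) * mapQ Q) := by
    calc (Jm * mapQ Y) * (Jm * mapQ Q) = Jm * (mapQ Y * Jm) * mapQ Q := by
          noncomm_ring
      _ = (Jm * Jm) * (mapQ (cst Y) * mapQ Q) := by rw [mapQ_Jm]; noncomm_ring
      _ = -(mapQ (cst Y) * mapQ Q) := by rw [Jm_Jm]; noncomm_ring
  have hneg : mapQ (-(cst Y * Q)) = -(mapQ (cst Y) * mapQ Q) := by
    rw [mapQ_neg, mapQ_mul]
  rw [mul_add, add_mul, add_mul, h1, h2, h3, hneg]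
  rw [mul_add]
  abel

lemma toQRH_apply (z : ℂ) : toQRH z = toQ z := rfl

lemma comp_re (x y : ℂ) : (toQ x + jq * toQ y).re = x.re := by simp <;> simp [toQ, jq]
lemma comp_imI (x y : ℂ) : (toQ x + jq * toQ y).imI = x.im := by simp <;> simp [toQ, jq]
lemma comp_imJ (x y : ℂ) : (toQ x + jq * toQ y).imJ = y.re := by simp <;> simp [toQ, jq]
lemma comp_imK (x y : ℂ) : (toQ x + jq * toQ y).imK = -y.im := by simp <;> simp [toQ, jq]

lemma quat_decomp_inj {x y x' y' : ℂ}
    (h : toQ x + jq * toQ y = toQ x' + jq * toQ y') : x = x' ∧ y = y' := by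
  have h1 := congrArg QuaternionAlgebra.re h
  have h2 := congrArg QuaternionAlgebra.imI h
  have h3 := congrArg QuaternionAlgebra.imJ h
  have h4 := congrArg QuaternionAlgebra.imK h
  rw [comp_re, comp_re] at h1
  rw [comp_imI, comp_imI] at h2
  rw [comp_imJ, comp_imJ] at h3
  rw [comp_imK, comp_imK] at h4
  exact ⟨Complex.ext h1 h2, Complex.ext h3 (by linarith)⟩

lemma Phi_apply (X Y : Matrix (Fin n) (Fin n) ℂ) (i j : Fin n) :
    Phi X Y i j = toQ (X i j) + jq * toQ (Y i j) := by
  simp [Phi, mapQ, Jm, Matrix.add_apply, Matrix.diagonal_mul, Matrix.map_apply, toQRH_apply]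

lemma Phi_inj {X Y X' Y' : Matrix (Fin n) (Fin n) ℂ} (h : Phi X Y = Phi X' Y') :
    X = X' ∧ Y = Y' := by
  constructor <;> funext i j <;>
    have e := congrFun (congrFun h i) j <;>
    rw [Phi_apply, Phi_apply] at e
  · exact (quat_decomp_inj e).1
  · exact (quat_decomp_inj e).2

noncomputable def Xof (W : Matrix (Fin n) (Fin n) ℍ[ℝ]) : Matrix (Fin n) (Fin n) ℂ :=
  fun i j => ⟨(W i j).re, (W i j).imI⟩

noncomputable def Yof (W : Matrix (Fin n) (Fin n) ℍ[ℝ]) : Matrix (Fin n) (Fin n) ℂ :=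
  fun i j => ⟨(W i j).imJ, -(W i j).imK⟩

lemma Phi_Xof_Yof (W : Matrix (Fin n) (Fin n) ℍ[ℝ]) : Phi (Xof W) (Yof W) = W := by
  funext i j
  rw [Phi_apply]
  ext <;> simp <;> simp [toQ, jq, Xof, Yof]

lemma qmat4_eq (A B C D : Matrix (Fin n) (Fin n) ℝ) :
    qmat4 A B C D = Phi (cmat A B) (cmat C (-D)) := by
  funext i j
  rw [Phi_apply]
  ext <;> simp <;> simp [toQ, jq, cmat, qmat4]

lemma cst_cmat (A B : Matrix (Fin n) (Fin n) ℝ) : cst (cmat A B) = cmat A (-B) := by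
  funext i j
  simp [cst, cmat, Complex.ext_iff]

lemma Phi_one : (Phi 1 0 : Matrix (Fin n) (Fin n) ℍ[ℝ]) = 1 := by
  rw [Phi]
  have h0 : mapQ (0 : Matrix (Fin n) (Fin n) ℂ) = 0 := by
    funext i j; simp [mapQ, Matrix.map_apply, toQRH_apply, toQ]; ext <;> simp
  have h1 : mapQ (1 : Matrix (Fin n) (Fin n) ℂ) = 1 := by
    rw [mapQ]; exact Matrix.map_one _ (map_zero toQRH) (map_one toQRH)
  rw [h0, h1, mul_zero, add_zero]

lemma eqs_of_mul_one {P Q X Y : Matrix (Fin n) (Fin n) ℂ}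
    (h : Phi X Y * Phi P Q = 1) : X * P - cst Y * Q = 1 ∧ cst X * Q + Y * P = 0 := by
  rw [Phi_mul, ← Phi_one] at h
  exact Phi_inj h

/-- If Z = A + iB + jC + kD is invertible and A + iB is invertible, then
(A+iB) + (C+iD)(A-iB)⁻¹(C-iD) is invertible and Z⁻¹ = W₁ - jW₂ with
W₁ = [(A+iB) + (C+iD)(A-iB)⁻¹(C-iD)]⁻¹ and W₂ = (A-iB)⁻¹(C-iD)·W₁. -/
theorem stmt10 {n : ℕ} (A B C D : Matrix (Fin n) (Fin n) ℝ)
    (hZ : ∃ W, W * qmat4 A B C D = 1 ∧ qmat4 A B C D * W = 1)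
    (hAB : IsUnit (cmat A B)) :
    IsUnit (cmat A B + cmat C D * (cmat A (-B))⁻¹ * cmat C (-D)) ∧
    (∀ W : Matrix (Fin n) (Fin n) ℍ[ℝ],
      W * qmat4 A B C D = 1 → qmat4 A B C D * W = 1 →
      W = fun i j =>
        toQ (((cmat A B + cmat C D * (cmat A (-B))⁻¹ * cmat C (-D))⁻¹) i j)
        - jq * toQ (((cmat A (-B))⁻¹ * cmat C (-D) *
            (cmat A B + cmat C D * (cmat A (-B))⁻¹ * cmat C (-D))⁻¹) i j)) := by
  set P := cmat A B with hP
  set Q := cmat C (-D) with hQ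
  have hPb : cmat A (-B) = cst P := (cst_cmat A B).symm
  have hQb : cmat C D = cst Q := by
    rw [hQ, cst_cmat]; simp
  have hPbu : IsUnit (cst P) := by
    have := hAB.map (starRingEnd ℂ).mapMatrix
    rwa [RingHom.mapMatrix_apply] at this
  haveI : Invertible (cst P) := hPbu.invertible
  set S := P + cst Q * (cst P)⁻¹ * Q with hS
  -- key derivation for any two-sided inverse W of Z
  have key : ∀ X Y : Matrix (Fin n) (Fin n) ℂ,
      Phi X Y * Phi P Q = 1 → Phi P Q * Phi X Y = 1 →
      S * X = 1 ∧ X * S = 1 ∧ cst P * Y = -(Q * X) := by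
    intro X Y hl hr
    obtain ⟨el1, el2⟩ := eqs_of_mul_one hl
    obtain ⟨er1, er2⟩ := eqs_of_mul_one hr
    -- er1 : P * X - cst Q * Y = 1 ; er2 : cst P * Y + Q * X = 0
    have hy : cst P * Y = -(Q * X) := eq_neg_of_add_eq_zero_left er2
    have hqx : Q * X = -(cst P * Y) := by rw [hy, neg_neg]
    have hSX : S * X = 1 := by
      have h1 : (cst P)⁻¹ * (Q * X) = -Y := by
        rw [hqx, mul_neg, Matrix.inv_mul_cancel_left_of_invertible]
      have h2 : cst Q * (cst P)⁻¹ * Q * X = -(cst Q * Y) := by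
        calc cst Q * (cst P)⁻¹ * Q * X = cst Q * ((cst P)⁻¹ * (Q * X)) := by
              rw [mul_assoc, mul_assoc]
          _ = cst Q * (-Y) := by rw [h1]
          _ = -(cst Q * Y) := by rw [mul_neg]
      rw [hS, add_mul, h2, ← sub_eq_add_neg]
      exact er1
    have hcl2 : X * cst Q + cst Y * cst P = 0 := by
      have := congrArg cst el2
      rwa [cst_add, cst_mul, cst_mul, cst_cst, cst_zero] at this
    have hXS : X * S = 1 := by
      have hx : X * cst Q = -(cst Y * cst P) := eq_neg_of_add_eq_zero_left hcl2
      have h3 : X * (cst Q * (cst P)⁻¹ * Q) = -(cst Y * Q) := by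
        calc X * (cst Q * (cst P)⁻¹ * Q) = (X * cst Q) * (cst P)⁻¹ * Q := by
              rw [← mul_assoc, ← mul_assoc]
          _ = -(cst Y * cst P) * (cst P)⁻¹ * Q := by rw [hx]
          _ = -(cst Y * cst P * (cst P)⁻¹ * Q) := by rw [neg_mul, neg_mul]
          _ = -(cst Y * Q) := by rw [Matrix.mul_inv_cancel_right_of_invertible]
      rw [hS, mul_add, h3, ← sub_eq_add_neg]
      exact el1
    exact ⟨hSX, hXS, hy⟩
  obtain ⟨W0, hW0l, hW0r⟩ := hZ
  rw [qmat4_eq, ← Phi_Xof_Yof W0] at hW0l hW0r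
  obtain ⟨hSX0, hXS0, -⟩ := key _ _ hW0l hW0r
  have hSunit : IsUnit S := ⟨⟨S, Xof W0, hSX0, hXS0⟩, rfl⟩
  constructor
  · rw [hPb, hQb]; exact hSunit
  · intro W hWl hWr
    rw [qmat4_eq, ← Phi_Xof_Yof W] at hWl hWr
    obtain ⟨hSX, hXS, hy⟩ := key _ _ hWl hWr
    have hXinv : Xof W = S⁻¹ := (Matrix.inv_eq_right_inv hSX).symm
    have hYinv : Yof W = -((cst P)⁻¹ * Q * S⁻¹) := by
      have := congrArg (fun M => (cst P)⁻¹ * M) hy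
      rw [Matrix.inv_mul_cancel_left_of_invertible] at this
      rw [this, hXinv]; noncomm_ring
    have hW : W = Phi (Xof W) (Yof W) := (Phi_Xof_Yof W).symm
    rw [hW, hXinv, hYinv]
    funext i j
    rw [Phi_apply]
    rw [hPb, hQb]
    have : (-((cst P)⁻¹ * Q * S⁻¹)) i j = -(((cst P)⁻¹ * Q * S⁻¹) i j) := rfl
    rw [this, show toQ (-(((cst P)⁻¹ * Q * S⁻¹) i j)) = -toQ (((cst P)⁻¹ * Q * S⁻¹) i j) from map_neg toQRH _]
    rw [mul_neg, ← sub_eq_add_neg]
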